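/- For a rational disparity d = p/q with p ∈ ℤ, q ∈ ℕ, q > 0 and p, q coprime, two views record the same point set exactly when their indices are congruent modulo q: for all u, u' ∈ ℤ, S_u(d) = S_{u'}(d) ↔ (q : ℤ) ∣ (u − u'). (E.g., for d = 1/5, views u, u+5, u+10, … sample the same point set while intermediate views sample different point sets.) -/

import Mathlib

/-!
View `u` records the coset `u * d + ℤ` of `ℤ` in `ℝ`, so two views agree exactly when
`(u - u') * d` is an integer. For `d = p / q` in lowest terms, `(u - u') * p / q ∈ ℤ` means
`q ∣ (u - u') * p`, and since `q` is coprime to `p` this is `q ∣ u - u'`.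
-/

/-- The set of 1D scene positions recorded by the view with index `u`
for a scene with common disparity `d`. -/
def recordedSet (u : ℤ) (d : ℝ) : Set ℝ :=
  {s : ℝ | ∃ n : ℤ, s = (n : ℝ) + (u : ℝ) * d}

theorem recordedSet_eq_iff (u u' : ℤ) (d : ℝ) :
    recordedSet u d = recordedSet u' d ↔ ∃ n : ℤ, ((u - u' : ℤ) : ℝ) * d = n := by
  constructor
  · intro h
    have hmem : (u : ℝ) * d ∈ recordedSet u' d := h ▸ ⟨0, by simp⟩
    obtain ⟨n, hn⟩ := hmem
    exact ⟨n, by push_cast; linarith⟩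
  · rintro ⟨k, hk⟩
    push_cast at hk
    ext s
    constructor
    · rintro ⟨n, rfl⟩
      exact ⟨n + k, by push_cast; linarith⟩
    · rintro ⟨n, rfl⟩
      exact ⟨n - k, by push_cast; linarith⟩

theorem exists_int_eq_int_mul_div_iff {p q : ℤ} (hq : q ≠ 0) (hcop : IsCoprime q p) (m : ℤ) :
    (∃ n : ℤ, (m : ℝ) * (p / q) = n) ↔ q ∣ m := by
  have hq' : (q : ℝ) ≠ 0 := Int.cast_ne_zero.mpr hq
  calc (∃ n : ℤ, (m : ℝ) * (p / q) = n) ↔ ∃ n : ℤ, m * p = q * n := by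
        refine exists_congr fun n => ?_
        rw [← mul_div_assoc, div_eq_iff hq', mul_comm (n : ℝ)]
        exact_mod_cast Iff.rfl
    _ ↔ q ∣ m * p := Iff.rfl
    _ ↔ q ∣ m := ⟨hcop.dvd_of_dvd_mul_right, (Dvd.dvd.mul_right · p)⟩

/-- For rational disparity `d = p/q` in lowest terms, two views record the
same point set exactly when their indices are congruent modulo `q`. -/
theorem same_point_set_iff_congruent_mod_q (p : ℤ) (q : ℕ) (hq : 0 < q)
    (hcop : Nat.Coprime p.natAbs q) (d : ℝ) (hd : d = (p : ℝ) / (q : ℝ)) :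
    ∀ u u' : ℤ, recordedSet u d = recordedSet u' d ↔ (q : ℤ) ∣ (u - u') := by
  intro u u'
  have hcop' : IsCoprime (q : ℤ) p := by
    rw [Int.isCoprime_iff_gcd_eq_one, Int.gcd_comm]
    exact hcop
  rw [recordedSet_eq_iff, hd]
  exact_mod_cast exists_int_eq_int_mul_div_iff (by exact_mod_cast hq.ne') hcop' (u - u')
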